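/- arXiv:2109.10391 — 11 statements merged into one kernel-verified Lean document; each statement's English description precedes it below -/
import Mathlib

section
/- Consider the quasi-radially symmetric map T(x,y) = (f(|x|) x/|x| + g(x) β - y, x) on ℝᴺ × ℝᴺ, where f is a scalar function, g : ℝᴺ → ℝ, and β ∈ ℝᴺ is a fixed vector. Then for any indices i < j < k, the function K_{i,j,k}(x,y) = β_i L_{j,k}(x,y) + β_j L_{k,i}(x,y) + β_k L_{i,j}(x,y), where L_{a,b}(x,y) = x_a y_b - y_a x_b, is an invariant of T. -/
theorem quasi_radial_K_invariant_general (N : ℕ) (f : ℝ → ℝ) (g : (Fin N → ℝ) → ℝ)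
    (β : Fin N → ℝ) (i j k : Fin N)
    (x y : Fin N → ℝ) :
    let T : (Fin N → ℝ) × (Fin N → ℝ) → (Fin N → ℝ) × (Fin N → ℝ) :=
      fun p => ((fun l => f (Real.sqrt (∑ m, p.1 m ^ 2)) * p.1 l /
          Real.sqrt (∑ m, p.1 m ^ 2) + g p.1 * β l - p.2 l), p.1)
    let L : Fin N → Fin N → (Fin N → ℝ) × (Fin N → ℝ) → ℝ :=
      fun a b p => p.1 a * p.2 b - p.2 a * p.1 b
    let K : (Fin N → ℝ) × (Fin N → ℝ) → ℝ :=
      fun p => β i * L j k p + β j * L k i p + β k * L i j p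
    K (T (x, y)) = K (x, y) := by
  intro T L K
  -- `K (x, y)` is the determinant with rows `β, x, y` in columns `i, j, k`. The first row of
  -- `T (x, y)` is `a • x + b • β - y`; the `x` and `β` parts drop out of the determinant, and
  -- the sign of `-y` is undone by swapping the last two rows.
  simp only [T, L, K]
  ring

/-- For a quasi-radially symmetric system, the functions `K_{i,j,k}` are invariants. -/
theorem quasi_radial_K_invariant (N : ℕ) (f : ℝ → ℝ) (g : (Fin N → ℝ) → ℝ)
    (β : Fin N → ℝ) (i j k : Fin N) (hij : i < j) (hjk : j < k)
    (x y : Fin N → ℝ) (hx : x ≠ 0) :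
    let T : (Fin N → ℝ) × (Fin N → ℝ) → (Fin N → ℝ) × (Fin N → ℝ) :=
      fun p => ((fun l => f (Real.sqrt (∑ m, p.1 m ^ 2)) * p.1 l /
          Real.sqrt (∑ m, p.1 m ^ 2) + g p.1 * β l - p.2 l), p.1)
    let L : Fin N → Fin N → (Fin N → ℝ) × (Fin N → ℝ) → ℝ :=
      fun a b p => p.1 a * p.2 b - p.2 a * p.1 b
    let K : (Fin N → ℝ) × (Fin N → ℝ) → ℝ :=
      fun p => β i * L j k p + β j * L k i p + β k * L i j p
    K (T (x, y)) = K (x, y) :=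
  quasi_radial_K_invariant_general N f g β i j k x y
end

section
/- Define the map on (J₊, J₋, J₃) ∈ ℝ³ by J₊' = α²J₊ - 2αJ₃ + J₋, J₋' = J₊, J₃' = -J₃ + αJ₊. Then both the Casimir C = J₊J₋ - J₃² and the function H = J₊ - αJ₃ + J₋ are invariants of this map. -/
/-- The Casimir `C = J₊J₋ - J₃²` and `H = J₊ - αJ₃ + J₋` are invariants of the
sl₂ dynamical system of the linear radially symmetric equation. -/
theorem sl2_linear_invariants (α Jp Jm J3 : ℝ) :
    let Jp' : ℝ := α ^ 2 * Jp - 2 * α * J3 + Jm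
    let Jm' : ℝ := Jp
    let J3' : ℝ := -J3 + α * Jp
    Jp' * Jm' - J3' ^ 2 = Jp * Jm - J3 ^ 2 ∧
    Jp' - α * J3' + Jm' = Jp - α * J3 + Jm :=
  ⟨by ring, by ring⟩
end

section
/- Define the map on (J₊, J₋, J₃) ∈ ℝ³ by J₊' = α²J₊ - 2αJ₃ + J₋, J₋' = J₊, J₃' = -J₃ + αJ₊. This map preserves the sl₂(ℝ) Lie–Poisson bracket determined by {J₊, J₋} = 4J₃, {J₊, J₃} = 2J₊, {J₋, J₃} = -2J₋; that is, the same bracket relations hold for the images J₊', J₋', J₃' computed via the Poisson bivector in the original variables. -/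
/-- Partial derivative of a function on ℝ³ in the `i`-th coordinate direction. -/
noncomputable def pd3 (f : (Fin 3 → ℝ) → ℝ) (i : Fin 3) (z : Fin 3 → ℝ) : ℝ :=
  fderiv ℝ f z (Pi.single i 1)

/-- The sl₂(ℝ) Lie–Poisson structure matrix in coordinates `(J₊, J₋, J₃)`,
determined by `{J₊,J₋} = 4J₃`, `{J₊,J₃} = 2J₊`, `{J₋,J₃} = -2J₋`. -/
noncomputable def sl2Mat (z : Fin 3 → ℝ) : Fin 3 → Fin 3 → ℝ :=
  ![![0, 4 * z 2, 2 * z 0], ![-(4 * z 2), 0, -(2 * z 1)], ![-(2 * z 0), 2 * z 1, 0]]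

/-- The Lie–Poisson bracket on ℝ³ associated to `sl2Mat`. -/
noncomputable def sl2Br (f g : (Fin 3 → ℝ) → ℝ) (z : Fin 3 → ℝ) : ℝ :=
  ∑ i, ∑ j, sl2Mat z i j * pd3 f i z * pd3 g j z

/-! The components of the map are linear functions `a ⬝ᵥ ·`, whose partial derivatives are the
constant coefficient vectors, so the bracket of two of them is the structure matrix paired with
their coefficient vectors; the three identities then reduce to polynomial identities in `α`. -/

open Matrix

lemma pd3_dotProduct (a : Fin 3 → ℝ) (i : Fin 3) (z : Fin 3 → ℝ) :
    pd3 (a ⬝ᵥ ·) i z = a i := by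
  have h : HasFDerivAt (a ⬝ᵥ ·)
      (∑ k, a k • ContinuousLinearMap.proj (R := ℝ) (φ := fun _ : Fin 3 => ℝ) k) z :=
    HasFDerivAt.fun_sum fun k _ => (hasFDerivAt_apply k z).const_smul (a k)
  rw [pd3, h.fderiv]
  simp [Pi.single_apply]

lemma sl2Br_dotProduct (a b z : Fin 3 → ℝ) :
    sl2Br (a ⬝ᵥ ·) (b ⬝ᵥ ·) z = 4 * z 2 * (a 0 * b 1 - a 1 * b 0)
      + 2 * z 0 * (a 0 * b 2 - a 2 * b 0) - 2 * z 1 * (a 1 * b 2 - a 2 * b 1) := by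
  simp only [sl2Br, pd3_dotProduct, sl2Mat, Fin.sum_univ_three, cons_val_zero, cons_val_one,
    cons_val_two, head_cons, tail_cons]
  ring

/-- The sl₂ dynamical system of the linear radially symmetric equation preserves
the sl₂(ℝ) Lie–Poisson bracket: the bracket relations hold for the images of the
coordinate functions. -/
theorem sl2_linear_poisson_preserved (α : ℝ) :
    let T : (Fin 3 → ℝ) → (Fin 3 → ℝ) :=
      fun z => ![α ^ 2 * z 0 - 2 * α * z 2 + z 1, z 0, -z 2 + α * z 0]
    (∀ z, sl2Br (fun w => T w 0) (fun w => T w 1) z = 4 * T z 2) ∧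
    (∀ z, sl2Br (fun w => T w 0) (fun w => T w 2) z = 2 * T z 0) ∧
    (∀ z, sl2Br (fun w => T w 1) (fun w => T w 2) z = -(2 * T z 1)) := by
  intro T
  have hT0 : (fun w => T w 0) = (![α ^ 2, 1, -(2 * α)] ⬝ᵥ ·) := by
    funext w; simp only [T, dotProduct, Fin.sum_univ_three, cons_val_zero, cons_val_one,
      cons_val_two, head_cons, tail_cons]; ring
  have hT1 : (fun w => T w 1) = (![1, 0, 0] ⬝ᵥ ·) := by
    funext w; simp only [T, dotProduct, Fin.sum_univ_three, cons_val_zero, cons_val_one,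
      cons_val_two, head_cons, tail_cons]; ring
  have hT2 : (fun w => T w 2) = (![α, 0, -1] ⬝ᵥ ·) := by
    funext w; simp only [T, dotProduct, Fin.sum_univ_three, cons_val_zero, cons_val_one,
      cons_val_two, head_cons, tail_cons]; ring
  refine ⟨fun z => ?_, fun z => ?_, fun z => ?_⟩ <;>
    simp only [hT0, hT1, hT2, sl2Br_dotProduct] <;>
    simp only [T, cons_val_zero, cons_val_one, cons_val_two, head_cons, tail_cons] <;>
    ring
end

section
/- Define the map on (J₊, J₋, J₃) by J₊' = α(α - 2J₃)/J₊ + 2J₃ - 2α + J₋ + J₊, J₋' = J₊, J₃' = α - J₃ - J₊ (valid for J₊ ≠ 0). Then the Casimir C = J₊J₋ - J₃² and the function H = (J₊ + J₋ + 2J₃)(J₊J₋ + α²) - 2α[2J₊J₋ + (J₊ + J₋)J₃] are both invariants of this map. -/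
/-- The Casimir and the invariant `H` of the sl₂ dynamical system associated with the
radially symmetric autonomous discrete Painlevé I system. -/
theorem sl2_dPI_invariants (α Jp Jm J3 : ℝ) (hJp : Jp ≠ 0) :
    let Jp' : ℝ := α * (α - 2 * J3) / Jp + 2 * J3 - 2 * α + Jm + Jp
    let Jm' : ℝ := Jp
    let J3' : ℝ := α - J3 - Jp
    Jp' * Jm' - J3' ^ 2 = Jp * Jm - J3 ^ 2 ∧
    (Jp' + Jm' + 2 * J3') * (Jp' * Jm' + α ^ 2)
        - 2 * α * (2 * Jp' * Jm' + (Jp' + Jm') * J3')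
      = (Jp + Jm + 2 * J3) * (Jp * Jm + α ^ 2)
        - 2 * α * (2 * Jp * Jm + (Jp + Jm) * J3) := by
  intro Jp' Jm' J3'
  have hstep : Jp' * Jp = α * (α - 2 * J3) + (2 * J3 - 2 * α + Jm + Jp) * Jp := by
    simp only [Jp']
    field_simp
    ring
  -- With `Jp'` kept as an atom, both identities lie in the ideal generated by `hstep`.
  simp only [Jm', J3']
  exact ⟨by linear_combination hstep, by linear_combination (Jp' + Jm - 2 * α) * hstep⟩
end

section
/- Define the map on (J₊, J₋, J₃) by J₊' = J₋ - 2αJ₃/(1 - J₊) + α²J₊/(1 - J₊)², J₋' = J₊, J₃' = -J₃ + αJ₊/(1 - J₊) (valid for J₊ ≠ 1). Then the Casimir C = J₊J₋ - J₃² and the function M = J₊ + J₋ - J₃(α + J₃) are both invariants of this map. -/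
/-- The Casimir and the invariant `M` of the sl₂ dynamical system associated with the
radially symmetric vector McMillan map. -/
theorem sl2_mcmillan_invariants (α Jp Jm J3 : ℝ) (hJp : Jp ≠ 1) :
    let Jp' : ℝ := Jm - 2 * α * J3 / (1 - Jp) + α ^ 2 * Jp / (1 - Jp) ^ 2
    let Jm' : ℝ := Jp
    let J3' : ℝ := -J3 + α * Jp / (1 - Jp)
    Jp' * Jm' - J3' ^ 2 = Jp * Jm - J3 ^ 2 ∧
    Jp' + Jm' - J3' * (α + J3') = Jp + Jm - J3 * (α + J3) := by
  have h : 1 - Jp ≠ 0 := sub_ne_zero.mpr hJp.symm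
  constructor <;> field_simp <;> ring
end

section
/- Consider the vector McMillan map T(x,y) = (αx/(1 - |x|²) - y, x) on ℝᴺ × ℝᴺ (defined for |x| ≠ 1). Then the function M(x,y) = |x|² + |y|² - (x·y)(α + x·y) is an invariant of T. -/
/-!
Write `s = |x|²`, `p = x·y`, `r = |y|²` and `c = α/(1 - s)`, so that `T(x,y) = (c x - y, x)`.
Then `M(T(x,y))` is a polynomial in `c, s, p, r`, and it reduces to `M(x,y) = s + r - p(α + p)`
once `α` is replaced by `c(1 - s)`.
-/

open Finset

section

variable {ι R : Type*} [Fintype ι] [CommRing R]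

theorem sum_mul_sub_sq (c : R) (x y : ι → R) :
    ∑ i, (c * x i - y i) ^ 2
      = c ^ 2 * ∑ i, x i ^ 2 - 2 * c * ∑ i, x i * y i + ∑ i, y i ^ 2 := by
  simp only [mul_sum, ← sum_sub_distrib, ← sum_add_distrib]
  exact sum_congr rfl fun i _ => by ring

theorem sum_mul_sub_mul (c : R) (x y : ι → R) :
    ∑ i, (c * x i - y i) * x i = c * ∑ i, x i ^ 2 - ∑ i, x i * y i := by
  simp only [mul_sum, ← sum_sub_distrib]
  exact sum_congr rfl fun i _ => by ring

theorem mcmillan_invariant_of_eq_mul {α c s p r : R} (h : α = c * (1 - s)) :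
    (c ^ 2 * s - 2 * c * p + r) + s - (c * s - p) * (α + (c * s - p))
      = s + r - p * (α + p) := by
  subst h
  ring

end

/-- `M(x,y) = |x|² + |y|² - (x·y)(α + x·y)` is an invariant of the vector McMillan map
`T(x,y) = (αx/(1-|x|²) - y, x)`. -/
theorem vector_mcmillan_invariant (N : ℕ) (α : ℝ) (x y : Fin N → ℝ)
    (hx : (∑ i, x i ^ 2) ≠ 1) :
    let T : (Fin N → ℝ) × (Fin N → ℝ) → (Fin N → ℝ) × (Fin N → ℝ) :=
      fun p => ((fun l => α * p.1 l / (1 - ∑ i, p.1 i ^ 2) - p.2 l), p.1)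
    let M : (Fin N → ℝ) × (Fin N → ℝ) → ℝ := fun p =>
      (∑ i, p.1 i ^ 2) + (∑ i, p.2 i ^ 2)
        - (∑ i, p.1 i * p.2 i) * (α + ∑ i, p.1 i * p.2 i)
    M (T (x, y)) = M (x, y) := by
  intro T M
  simp only [T, M]
  set s := ∑ i, x i ^ 2
  have hα : α = α / (1 - s) * (1 - s) := (div_mul_cancel₀ α (sub_ne_zero.mpr hx.symm)).symm
  have hT : ∀ l, α * x l / (1 - s) - y l = α / (1 - s) * x l - y l :=
    fun l => by rw [mul_div_right_comm]
  simp only [hT, sum_mul_sub_sq, sum_mul_sub_mul]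
  exact mcmillan_invariant_of_eq_mul hα
end

section
/- Consider the quasi-radial linear map T(x,y) = ((1 + α₁ β·x)β - α₀ x - y, x) on ℝᴺ × ℝᴺ, where α₀, α₁ ∈ ℝ and β ∈ ℝᴺ. Then H₂(x,y) = α₀[(β·y)(β·x) - (x·y)|β|²] + (β·y)² + (β·x)² - (|y|² + |x|²)|β|² is an invariant of T. -/
/-!
Write `g(u, v) = (β·u)(β·v) - (u·v)|β|²`, which is `-|β|²` times the inner product of the
components of `u` and `v` orthogonal to `β`. Then `H₂(x, y) = α₀ g(y, x) + g(y, y) + g(x, x)`,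
and `g` does not see the `β`-direction, so the nonlinear term `(1 + α₁ β·x) β` of `T` drops out.
What remains is the linear map `(x, y) ↦ (-α₀ x - y, x)`, which preserves the quadratic form
`|x|² + |y|² + α₀ x·y`.
-/

open Matrix

variable {ι R : Type*} [Fintype ι] [CommRing R]

def perpPairing (β u v : ι → R) : R :=
  (β ⬝ᵥ u) * (β ⬝ᵥ v) - (u ⬝ᵥ v) * (β ⬝ᵥ β)

theorem perpPairing_add_smul_left (β u v : ι → R) (c : R) :
    perpPairing β (c • β + u) v = perpPairing β u v := by
  simp only [perpPairing, dotProduct_add, add_dotProduct, dotProduct_smul, smul_dotProduct,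
    smul_eq_mul]
  ring

theorem perpPairing_comm (β u v : ι → R) : perpPairing β u v = perpPairing β v u := by
  rw [perpPairing, perpPairing, dotProduct_comm u v, mul_comm (β ⬝ᵥ u)]

theorem perpPairing_add_smul_right (β u v : ι → R) (c : R) :
    perpPairing β u (c • β + v) = perpPairing β u v := by
  rw [perpPairing_comm, perpPairing_add_smul_left, perpPairing_comm]

def quasiRadialH₂ (α₀ : R) (β x y : ι → R) : R :=
  α₀ * perpPairing β y x + perpPairing β y y + perpPairing β x x

theorem quasiRadialH₂_map (α₀ c : R) (β x y : ι → R) :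
    quasiRadialH₂ α₀ β (c • β - α₀ • x - y) x = quasiRadialH₂ α₀ β x y := by
  have hsplit : c • β - α₀ • x - y = c • β + (-(α₀ • x) - y) := by abel
  rw [quasiRadialH₂, hsplit, perpPairing_add_smul_right, perpPairing_add_smul_left,
    perpPairing_add_smul_right]
  simp only [quasiRadialH₂, perpPairing, dotProduct_sub, sub_dotProduct, dotProduct_neg,
    neg_dotProduct, dotProduct_smul, smul_dotProduct, smul_eq_mul, dotProduct_comm y x]
  ring

/-- `H₂` is an invariant of the quasi-radial linear map
`T(x,y) = ((1 + α₁ β·x)β - α₀x - y, x)`. -/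
theorem quasi_radial_linear_H2_invariant (N : ℕ) (α₀ α₁ : ℝ) (β x y : Fin N → ℝ) :
    let T : (Fin N → ℝ) × (Fin N → ℝ) → (Fin N → ℝ) × (Fin N → ℝ) :=
      fun p => ((fun l => (1 + α₁ * ∑ i, β i * p.1 i) * β l - α₀ * p.1 l - p.2 l), p.1)
    let H₂ : (Fin N → ℝ) × (Fin N → ℝ) → ℝ := fun p =>
      α₀ * ((∑ i, β i * p.2 i) * (∑ i, β i * p.1 i)
            - (∑ i, p.1 i * p.2 i) * (∑ i, β i ^ 2))
        + (∑ i, β i * p.2 i) ^ 2 + (∑ i, β i * p.1 i) ^ 2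
        - ((∑ i, p.2 i ^ 2) + (∑ i, p.1 i ^ 2)) * (∑ i, β i ^ 2)
    H₂ (T (x, y)) = H₂ (x, y) := by
  intro T H₂
  have hT : T (x, y) = ((1 + α₁ * (β ⬝ᵥ x)) • β - α₀ • x - y, x) := rfl
  have hH₂ : ∀ p, H₂ p = quasiRadialH₂ α₀ β p.1 p.2 := fun p => by
    simp only [H₂, quasiRadialH₂, perpPairing, dotProduct, sq, mul_comm (p.2 _) (p.1 _)]
    ring
  rw [hT, hH₂, hH₂]
  exact quasiRadialH₂_map α₀ _ β x y
end

section
/- Consider the nonlinear quasi-radial map T(x,y) = ([1 + α₁(β·x) + ε(β·x)²]β - α₀x - y, x) on ℝᴺ × ℝᴺ, where α₀, α₁, ε ∈ ℝ and β ∈ ℝᴺ. Then for any indices i < j < k, K_{i,j,k}(x,y) = β_i(x_j y_k - x_k y_j) + β_j(x_k y_i - x_i y_k) + β_k(x_i y_j - x_j y_i) is an invariant of T. -/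
/-- The `3 × 3` minor of the matrix with columns `β, u, v` on the rows `i, j, k`. -/
def betaMinor {N : ℕ} (β : Fin N → ℝ) (i j k : Fin N) (u v : Fin N → ℝ) : ℝ :=
  β i * (u j * v k - u k * v j) + β j * (u k * v i - u i * v k) + β k * (u i * v j - u j * v i)

/- The minor is alternating, so the multiples of `β` and `u` drop out of `(c β - a u - v, u)`,
and the swap of the last two columns cancels the sign of `-v`. -/
theorem betaMinor_shear {N : ℕ} (β : Fin N → ℝ) (i j k : Fin N) (u v : Fin N → ℝ) (c a : ℝ) :
    betaMinor β i j k (fun l => c * β l - a * u l - v l) u = betaMinor β i j k u v := by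
  unfold betaMinor
  ring

theorem nonlinear_quasi_radial_K_invariant_general (N : ℕ) (α₀ α₁ ε : ℝ) (β : Fin N → ℝ)
    (i j k : Fin N) (x y : Fin N → ℝ) :
    let T : (Fin N → ℝ) × (Fin N → ℝ) → (Fin N → ℝ) × (Fin N → ℝ) :=
      fun p => ((fun l => (1 + α₁ * (∑ m, β m * p.1 m)
          + ε * (∑ m, β m * p.1 m) ^ 2) * β l - α₀ * p.1 l - p.2 l), p.1)
    let K : (Fin N → ℝ) × (Fin N → ℝ) → ℝ := fun p =>
      β i * (p.1 j * p.2 k - p.1 k * p.2 j)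
        + β j * (p.1 k * p.2 i - p.1 i * p.2 k)
        + β k * (p.1 i * p.2 j - p.1 j * p.2 i)
    K (T (x, y)) = K (x, y) :=
  betaMinor_shear β i j k x y (1 + α₁ * (∑ m, β m * x m) + ε * (∑ m, β m * x m) ^ 2) α₀

/-- The functions `K_{i,j,k}` are invariants of the nonlinear quasi-radial map
`T(x,y) = ([1 + α₁(β·x) + ε(β·x)²]β - α₀x - y, x)`. -/
theorem nonlinear_quasi_radial_K_invariant (N : ℕ) (α₀ α₁ ε : ℝ) (β : Fin N → ℝ)
    (i j k : Fin N) (hij : i < j) (hjk : j < k) (x y : Fin N → ℝ) :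
    let T : (Fin N → ℝ) × (Fin N → ℝ) → (Fin N → ℝ) × (Fin N → ℝ) :=
      fun p => ((fun l => (1 + α₁ * (∑ m, β m * p.1 m)
          + ε * (∑ m, β m * p.1 m) ^ 2) * β l - α₀ * p.1 l - p.2 l), p.1)
    let K : (Fin N → ℝ) × (Fin N → ℝ) → ℝ := fun p =>
      β i * (p.1 j * p.2 k - p.1 k * p.2 j)
        + β j * (p.1 k * p.2 i - p.1 i * p.2 k)
        + β k * (p.1 i * p.2 j - p.1 j * p.2 i)
    K (T (x, y)) = K (x, y) :=
  nonlinear_quasi_radial_K_invariant_general N α₀ α₁ ε β i j k x y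
end

section
/- Consider the map on ℝ³ (coordinates J₊, J₋, J₃) given by J₊' = f(√J₊)² - 2J₃ f(√J₊)/√J₊ + J₋, J₋' = J₊, J₃' = -J₃ + √J₊ f(√J₊), where f is any scalar function (assume J₊ > 0). Then the Casimir C = J₊J₋ - J₃² is an invariant of this map for every choice of f. -/
/-- Writing `J₊ = s²` and `x = f s`, the Casimir identity is a field identity in `s ≠ 0`. -/
theorem casimir_map_invariant_of_ne_zero {K : Type*} [Field K] {s : K} (hs : s ≠ 0)
    (x Jm J3 : K) :
    (x ^ 2 - 2 * J3 * x / s + Jm) * s ^ 2 - (-J3 + s * x) ^ 2 = s ^ 2 * Jm - J3 ^ 2 := by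
  field_simp
  ring

/-- The sl₂ Casimir `C = J₊J₋ - J₃²` is an invariant of the dynamical system induced
on the sl₂ generators by an arbitrary radially symmetric standard-form system,
for every choice of `f`. -/
theorem sl2_general_radial_casimir (f : ℝ → ℝ) (Jp Jm J3 : ℝ) (hJp : 0 < Jp) :
    let Jp' : ℝ := f (Real.sqrt Jp) ^ 2
      - 2 * J3 * f (Real.sqrt Jp) / Real.sqrt Jp + Jm
    let Jm' : ℝ := Jp
    let J3' : ℝ := -J3 + Real.sqrt Jp * f (Real.sqrt Jp)
    Jp' * Jm' - J3' ^ 2 = Jp * Jm - J3 ^ 2 := by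
  intro Jp' Jm' J3'
  have h := casimir_map_invariant_of_ne_zero (Real.sqrt_ne_zero'.mpr hJp) (f (Real.sqrt Jp)) Jm J3
  rwa [Real.sq_sqrt hJp.le] at h
end

section
/- Let f : (0,∞) → ℝ be any function and consider the radially symmetric map T(x,y) = (f(|x|)x/|x| - y, x) on (ℝᴺ \ {0}) × ℝᴺ. Then under T, the sl₂ realisation (J₊, J₋, J₃) = (|x|², |y|², x·y) transforms as J₊ ↦ f(√J₊)² - 2J₃ f(√J₊)/√J₊ + J₋, J₋ ↦ J₊, J₃ ↦ -J₃ + √J₊ f(√J₊); in particular the induced evolution on (J₊, J₋, J₃) is closed, depending only on (J₊, J₋, J₃). -/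
/-!
With `r = |x|`, the first component of `T(x, y)` is the vector `(f r / r) • x - y`. Expanding
`‖(c / ‖x‖) • x - y‖²` and `⟪(c / ‖x‖) • x - y, x⟫` in an arbitrary real inner product space
expresses them through `‖x‖²`, `‖y‖²` and `⟪x, y⟫` alone, and on `ℝᴺ` these are `J₊`, `J₋`, `J₃`.
-/

open RealInnerProductSpace

section InnerProductSpace

variable {E : Type*} [NormedAddCommGroup E] [InnerProductSpace ℝ E] {x : E}

theorem norm_div_norm_smul_sub_sq (hx : x ≠ 0) (c : ℝ) (y : E) :
    ‖(c / ‖x‖) • x - y‖ ^ 2 = c ^ 2 - 2 * ⟪x, y⟫ * c / ‖x‖ + ‖y‖ ^ 2 := by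
  have h : ‖x‖ ≠ 0 := norm_ne_zero_iff.mpr hx
  rw [norm_sub_sq_real, norm_smul, real_inner_smul_left, Real.norm_eq_abs, mul_pow, sq_abs]
  field_simp

theorem inner_div_norm_smul_sub_self (hx : x ≠ 0) (c : ℝ) (y : E) :
    ⟪(c / ‖x‖) • x - y, x⟫ = -⟪x, y⟫ + ‖x‖ * c := by
  have h : ‖x‖ ≠ 0 := norm_ne_zero_iff.mpr hx
  rw [inner_sub_left, real_inner_smul_left, real_inner_self_eq_norm_sq, real_inner_comm]
  field_simp
  ring

end InnerProductSpace

section EuclideanSpace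

variable {ι : Type*} [Fintype ι]

theorem sum_sq_eq_norm_toLp_sq (v : ι → ℝ) : ∑ i, v i ^ 2 = ‖WithLp.toLp 2 v‖ ^ 2 :=
  (EuclideanSpace.real_norm_sq_eq _).symm

theorem sum_mul_eq_inner_toLp (v w : ι → ℝ) :
    ∑ i, v i * w i = ⟪WithLp.toLp 2 v, WithLp.toLp 2 w⟫ := by
  simp [PiLp.inner_apply, mul_comm]

end EuclideanSpace

/-- For any radially symmetric map `T(x,y) = (f(|x|)x/|x| - y, x)`, the evolution of the
sl₂ realisation `(J₊, J₋, J₃) = (|x|², |y|², x·y)` is closed, with explicit formulas. -/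
theorem sl2_radial_closure (N : ℕ) (f : ℝ → ℝ) (x y : Fin N → ℝ) (hx : x ≠ 0) :
    let T : (Fin N → ℝ) × (Fin N → ℝ) → (Fin N → ℝ) × (Fin N → ℝ) :=
      fun p => ((fun l => f (Real.sqrt (∑ m, p.1 m ^ 2)) * p.1 l /
          Real.sqrt (∑ m, p.1 m ^ 2) - p.2 l), p.1)
    let Jp : (Fin N → ℝ) × (Fin N → ℝ) → ℝ := fun p => ∑ i, p.1 i ^ 2
    let Jm : (Fin N → ℝ) × (Fin N → ℝ) → ℝ := fun p => ∑ i, p.2 i ^ 2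
    let J3 : (Fin N → ℝ) × (Fin N → ℝ) → ℝ := fun p => ∑ i, p.1 i * p.2 i
    Jp (T (x, y)) = f (Real.sqrt (Jp (x, y))) ^ 2
        - 2 * J3 (x, y) * f (Real.sqrt (Jp (x, y))) / Real.sqrt (Jp (x, y))
        + Jm (x, y) ∧
    Jm (T (x, y)) = Jp (x, y) ∧
    J3 (T (x, y)) = -J3 (x, y) + Real.sqrt (Jp (x, y)) * f (Real.sqrt (Jp (x, y))) := by
  intro T Jp Jm J3
  set u := WithLp.toLp 2 x
  set v := WithLp.toLp 2 y
  have hu : u ≠ 0 := by simpa [u] using hx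
  have hJp (p : (Fin N → ℝ) × (Fin N → ℝ)) : Jp p = ‖WithLp.toLp 2 p.1‖ ^ 2 :=
    sum_sq_eq_norm_toLp_sq p.1
  have hJ3 (p : (Fin N → ℝ) × (Fin N → ℝ)) : J3 p = ⟪WithLp.toLp 2 p.1, WithLp.toLp 2 p.2⟫ :=
    sum_mul_eq_inner_toLp p.1 p.2
  have hsqrt : Real.sqrt (Jp (x, y)) = ‖u‖ := by rw [hJp, Real.sqrt_sq (norm_nonneg u)]
  have hT : WithLp.toLp 2 (T (x, y)).1 = (f ‖u‖ / ‖u‖) • u - v := by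
    ext l
    simp only [T, ← hsqrt, u, v, PiLp.sub_apply, PiLp.smul_apply, smul_eq_mul]
    ring
  refine ⟨?_, rfl, ?_⟩
  · rw [hJp, hT, hsqrt, hJ3, show Jm (x, y) = ‖v‖ ^ 2 from sum_sq_eq_norm_toLp_sq y]
    exact norm_div_norm_smul_sub_sq hu _ _
  · rw [hJ3, hT, hsqrt, hJ3]
    exact inner_div_norm_smul_sub_self hu _ _
end

section
/- Consider the map T(x,y) = (α x/|x|² + β - x - y, x) on (ℝᴺ \ {0}) × ℝᴺ, with α ∈ ℝ, β ∈ ℝᴺ (the vector autonomous discrete Painlevé I system x_{n+1} + x_n + x_{n-1} = αx_n/|x_n|² + β). Then for indices i < j < k, K_{i,j,k}(x,y) = β_i(x_j y_k - x_k y_j) + β_j(x_k y_i - x_i y_k) + β_k(x_i y_j - x_j y_i) is an invariant of T. -/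
theorem vector_dPI_K_invariant_general (N : ℕ) (α : ℝ) (β : Fin N → ℝ)
    (i j k : Fin N) (x y : Fin N → ℝ) :
    let T : (Fin N → ℝ) × (Fin N → ℝ) → (Fin N → ℝ) × (Fin N → ℝ) :=
      fun p => ((fun l => α * p.1 l / (∑ m, p.1 m ^ 2) + β l - p.1 l - p.2 l), p.1)
    let K : (Fin N → ℝ) × (Fin N → ℝ) → ℝ := fun p =>
      β i * (p.1 j * p.2 k - p.1 k * p.2 j)
        + β j * (p.1 k * p.2 i - p.1 i * p.2 k)
        + β k * (p.1 i * p.2 j - p.1 j * p.2 i)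
    K (T (x, y)) = K (x, y) := by
  intro T K
  simp only [T, K]
  -- `K` is the minor `det (β, x, y)` on rows `i, j, k`, and `T` sends `(x, y)` to
  -- `(c • x + β - x - y, x)`, which leaves that determinant unchanged.
  ring

/-- The functions `K_{i,j,k}` are invariants of the vector autonomous discrete
Painlevé I map `T(x,y) = (αx/|x|² + β - x - y, x)`. -/
theorem vector_dPI_K_invariant (N : ℕ) (α : ℝ) (β : Fin N → ℝ)
    (i j k : Fin N) (hij : i < j) (hjk : j < k) (x y : Fin N → ℝ) (hx : x ≠ 0) :
    let T : (Fin N → ℝ) × (Fin N → ℝ) → (Fin N → ℝ) × (Fin N → ℝ) :=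
      fun p => ((fun l => α * p.1 l / (∑ m, p.1 m ^ 2) + β l - p.1 l - p.2 l), p.1)
    let K : (Fin N → ℝ) × (Fin N → ℝ) → ℝ := fun p =>
      β i * (p.1 j * p.2 k - p.1 k * p.2 j)
        + β j * (p.1 k * p.2 i - p.1 i * p.2 k)
        + β k * (p.1 i * p.2 j - p.1 j * p.2 i)
    K (T (x, y)) = K (x, y) :=
  vector_dPI_K_invariant_general N α β i j k x y
end
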